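/- arXiv:2207.13513 — 4 statements merged into one kernel-verified Lean document; each statement's English description precedes it below -/
import Mathlib

section
/- Let ε > 0, define Fε⁺(θ) = ∫ max_{v ∈ V} (θ + εz) · v dγ(z), Ωε⁺(μ) = sup_{θ' ∈ ℝ^d} (θ' · μ − Fε⁺(θ')), and f̂ε⁺(θ) = ∫ f(θ + εz) dγ(z). Then for every θ ∈ ℝ^d, the Fenchel equality Fε⁺(θ) + Ωε⁺(f̂ε⁺(θ)) = θ · f̂ε⁺(θ) holds; consequently f̂ε⁺(θ) maximizes μ ↦ θ · μ − Ωε⁺(μ) over all μ with Ωε⁺(μ) < +∞. -/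
open MeasureTheory ProbabilityTheory Real

/-- The standard Gaussian measure on `ℝ^d`. -/
noncomputable def stdGaussian (d : ℕ) : Measure (EuclideanSpace ℝ (Fin d)) :=
  (Measure.pi fun _ : Fin d => gaussianReal 0 1).map
    (MeasurableEquiv.toLp 2 (Fin d → ℝ))

/-- `Fε⁺(θ) = ∫ max_{v ∈ V} (θ + εz)·v dγ(z)`. -/
noncomputable def Fplus {d : ℕ} (V : Finset (EuclideanSpace ℝ (Fin d))) (hV : V.Nonempty)
    (ε : ℝ) (θ : EuclideanSpace ℝ (Fin d)) : ℝ :=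
  ∫ z, V.sup' hV (fun w => ∑ i, (θ + ε • z) i * w i) ∂(stdGaussian d)

/-- `Ωε⁺(μ) = sup_θ' (θ'·μ − Fε⁺(θ'))`, with values in `ℝ ∪ {+∞}` (here `EReal`). -/
noncomputable def OmegaPlus {d : ℕ} (V : Finset (EuclideanSpace ℝ (Fin d))) (hV : V.Nonempty)
    (ε : ℝ) (μ : EuclideanSpace ℝ (Fin d)) : EReal :=
  ⨆ θ' : EuclideanSpace ℝ (Fin d), ((∑ i, θ' i * μ i - Fplus V hV ε θ' : ℝ) : EReal)

section Aux

instance stdGaussian_isProbability (d : ℕ) : IsProbabilityMeasure (stdGaussian d) :=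
  Measure.isProbabilityMeasure_map (MeasurableEquiv.measurable _).aemeasurable

lemma integrable_id_gaussianReal : Integrable (fun x : ℝ => x) (gaussianReal 0 1) := by
  rw [gaussianReal_of_var_ne_zero 0 one_ne_zero,
    integrable_withDensity_iff (measurable_gaussianPDF 0 1)
      (ae_of_all _ fun x => ENNReal.ofReal_lt_top)]
  have key : Integrable (fun x : ℝ => x ^ (1 : ℝ) * rexp (-(2⁻¹ : ℝ) * x ^ 2)) :=
    integrable_rpow_mul_exp_neg_mul_sq (by norm_num) (by norm_num)
  simp only [Real.rpow_one] at key
  refine ((key.const_mul ((√(2 * π))⁻¹))).congr (ae_of_all _ fun x => ?_)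
  simp only [gaussianPDF]
  rw [ENNReal.toReal_ofReal (gaussianPDFReal_nonneg _ _ _), gaussianPDFReal]
  push_cast
  rw [show (-(x - 0) ^ 2 / (2 * 1) : ℝ) = -(2⁻¹ : ℝ) * x ^ 2 by ring]
  ring

lemma pi_map_eval (d : ℕ) (i : Fin d) :
    (Measure.pi fun _ : Fin d => gaussianReal 0 1).map (Function.eval i) = gaussianReal 0 1 := by
  ext s hs
  rw [Measure.map_apply (measurable_pi_apply i) hs, Set.eval_preimage, Measure.pi_pi]
  rw [Finset.prod_eq_single i (fun j _ hj => by simp [Function.update_of_ne hj]) (by simp)]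
  simp

lemma integrable_eval_pi (d : ℕ) (i : Fin d) :
    Integrable (fun x : Fin d → ℝ => x i) (Measure.pi fun _ : Fin d => gaussianReal 0 1) := by
  have h : Integrable (fun x : ℝ => x)
      ((Measure.pi fun _ : Fin d => gaussianReal 0 1).map (Function.eval i)) := by
    rw [pi_map_eval]; exact integrable_id_gaussianReal
  exact (integrable_map_measure aestronglyMeasurable_id
    (measurable_pi_apply i).aemeasurable).mp h

lemma integrable_coord (d : ℕ) (i : Fin d) :
    Integrable (fun z : EuclideanSpace ℝ (Fin d) => z i) (stdGaussian d) := by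
  rw [_root_.stdGaussian]
  exact (integrable_map_equiv _ _).mpr (integrable_eval_pi d i)

lemma integrable_sup'_fun {X α : Type*} [MeasurableSpace X] {μ : Measure X} {s : Finset α}
    (hs : s.Nonempty) {A : α → X → ℝ} (h : ∀ a ∈ s, Integrable (A a) μ) :
    Integrable (fun x => s.sup' hs fun a => A a x) μ := by
  induction hs using Finset.Nonempty.cons_induction with
  | singleton a =>
    exact (h a (Finset.mem_singleton_self a)).congr
      (ae_of_all _ fun x => (Finset.sup'_singleton (f := fun b => A b x)).symm)
  | cons a s ha hs ih =>
    refine ((h a (Finset.mem_cons_self a s)).sup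
      (ih fun b hb => h b (Finset.mem_cons_of_mem hb))).congr
      (ae_of_all _ fun x => (Finset.sup'_cons hs (fun b => A b x)).symm)

end Aux

/-- The Fenchel equality `Fε⁺(θ) + Ωε⁺(f̂ε⁺(θ)) = θ · f̂ε⁺(θ)` holds, and consequently
`f̂ε⁺(θ)` maximizes `μ ↦ θ·μ − Ωε⁺(μ)` over the effective domain of `Ωε⁺`. -/
theorem stmt_4 {d : ℕ} (V : Finset (EuclideanSpace ℝ (Fin d))) (hV : V.Nonempty)
    (f : EuclideanSpace ℝ (Fin d) → EuclideanSpace ℝ (Fin d))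
    (hf_meas : Measurable f) (hf_mem : ∀ u, f u ∈ V)
    (hf_max : ∀ u, ∑ i, u i * f u i = V.sup' hV (fun w => ∑ i, u i * w i))
    (ε : ℝ) (hε : 0 < ε) (θ : EuclideanSpace ℝ (Fin d)) :
    ((Fplus V hV ε θ : ℝ) : EReal)
        + OmegaPlus V hV ε (∫ z, f (θ + ε • z) ∂(stdGaussian d))
      = ((∑ i, θ i * (∫ z, f (θ + ε • z) ∂(stdGaussian d)) i : ℝ) : EReal) ∧
    ∀ μ : EuclideanSpace ℝ (Fin d), OmegaPlus V hV ε μ ≠ ⊤ →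
      ((∑ i, θ i * μ i : ℝ) : EReal) - OmegaPlus V hV ε μ
        ≤ ((∑ i, θ i * (∫ z, f (θ + ε • z) ∂(stdGaussian d)) i : ℝ) : EReal)
          - OmegaPlus V hV ε (∫ z, f (θ + ε • z) ∂(stdGaussian d)) := by
  classical
  set m : Measure (EuclideanSpace ℝ (Fin d)) := stdGaussian d with hm
  -- measurability of `z ↦ f (θ + ε • z)`
  have haff : Measurable fun z : EuclideanSpace ℝ (Fin d) => θ + ε • z :=
    (continuous_const.add (continuous_id.const_smul ε)).measurable
  have hg_meas : Measurable fun z : EuclideanSpace ℝ (Fin d) => f (θ + ε • z) :=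
    hf_meas.comp haff
  have hgi_meas : ∀ i, Measurable fun z : EuclideanSpace ℝ (Fin d) => f (θ + ε • z) i :=
    fun i => (EuclideanSpace.proj i : EuclideanSpace ℝ (Fin d) →L[ℝ] ℝ).continuous.measurable.comp hg_meas
  -- boundedness and integrability of `f (θ + ε • z)`
  have hg_int : Integrable (fun z => f (θ + ε • z)) m := by
    refine (integrable_const (V.sup' hV fun w => ‖w‖)).mono'
      hg_meas.aestronglyMeasurable (ae_of_all _ fun z => ?_)
    exact Finset.le_sup' (fun w => ‖w‖) (hf_mem _)
  have hgi_int : ∀ i, Integrable (fun z => f (θ + ε • z) i) m := by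
    intro i
    refine (integrable_const (V.sup' hV fun w => |w i|)).mono'
      (hgi_meas i).aestronglyMeasurable (ae_of_all _ fun z => ?_)
    exact Finset.le_sup' (fun w => |w i|) (hf_mem _)
  have hzg_int : ∀ i, Integrable (fun z : EuclideanSpace ℝ (Fin d) =>
      z i * f (θ + ε • z) i) m := by
    intro i
    refine (((integrable_coord d i).abs).mul_const (V.sup' hV fun w => |w i|)).mono'
      (((EuclideanSpace.proj i : EuclideanSpace ℝ (Fin d) →L[ℝ] ℝ).continuous.measurable).mul (hgi_meas i)).aestronglyMeasurable
      (ae_of_all _ fun z => ?_)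
    rw [Real.norm_eq_abs, abs_mul]
    exact mul_le_mul_of_nonneg_left
      (Finset.le_sup' (fun w => |w i|) (hf_mem _)) (abs_nonneg _)
  -- integrability of linear integrands
  have hlin_int : ∀ c w : EuclideanSpace ℝ (Fin d),
      Integrable (fun z : EuclideanSpace ℝ (Fin d) => ∑ i, (c + ε • z) i * w i) m := by
    intro c w
    have : (fun z : EuclideanSpace ℝ (Fin d) => ∑ i, (c + ε • z) i * w i)
        = fun z => ∑ i : Fin d, (c i * w i + (ε * w i) * z i) := by
      funext z
      refine Finset.sum_congr rfl fun i _ => ?_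
      simp only [PiLp.add_apply, PiLp.smul_apply, smul_eq_mul]
      ring
    rw [this]
    exact integrable_finset_sum _ fun i _ =>
      (integrable_const _).add ((integrable_coord d i).const_mul _)
  have hsup_int : ∀ c : EuclideanSpace ℝ (Fin d),
      Integrable (fun z => V.sup' hV fun w => ∑ i, (c + ε • z) i * w i) m :=
    fun c => integrable_sup'_fun hV fun w _ => hlin_int c w
  have hcdot_int : ∀ c : EuclideanSpace ℝ (Fin d),
      Integrable (fun z => ∑ i, c i * f (θ + ε • z) i) m :=
    fun c => integrable_finset_sum _ fun i _ => (hgi_int i).const_mul _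
  have hdot_int : ∀ c : EuclideanSpace ℝ (Fin d),
      Integrable (fun z => ∑ i, (c + ε • z) i * f (θ + ε • z) i) m := by
    intro c
    have : (fun z : EuclideanSpace ℝ (Fin d) => ∑ i, (c + ε • z) i * f (θ + ε • z) i)
        = fun z => ∑ i : Fin d, (c i * f (θ + ε • z) i + ε * (z i * f (θ + ε • z) i)) := by
      funext z
      refine Finset.sum_congr rfl fun i _ => ?_
      simp only [PiLp.add_apply, PiLp.smul_apply, smul_eq_mul]
      ring
    rw [this]
    exact integrable_finset_sum _ fun i _ =>
      ((hgi_int i).const_mul _).add ((hzg_int i).const_mul ε)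
  -- coordinates of the mean
  have hproj : ∀ i, (∫ z, f (θ + ε • z) ∂m) i = ∫ z, f (θ + ε • z) i ∂m := by
    intro i
    have := (EuclideanSpace.proj i : EuclideanSpace ℝ (Fin d) →L[ℝ] ℝ).integral_comp_comm hg_int
    simpa using this.symm
  have hdotI : ∀ c : EuclideanSpace ℝ (Fin d),
      ∑ i, c i * (∫ z, f (θ + ε • z) ∂m) i = ∫ z, ∑ i, c i * f (θ + ε • z) i ∂m := by
    intro c
    calc ∑ i, c i * (∫ z, f (θ + ε • z) ∂m) i
        = ∑ i, ∫ z, c i * f (θ + ε • z) i ∂m := by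
          refine Finset.sum_congr rfl fun i _ => ?_
          rw [hproj i, integral_const_mul]
      _ = ∫ z, ∑ i, c i * f (θ + ε • z) i ∂m :=
          (integral_finset_sum _ fun i _ => (hgi_int i).const_mul _).symm
  -- F θ as an integral of the dot product with f
  have hFθ : Fplus V hV ε θ = ∫ z, ∑ i, (θ + ε • z) i * f (θ + ε • z) i ∂m := by
    rw [Fplus]
    exact integral_congr_ae (ae_of_all _ fun z => (hf_max (θ + ε • z)).symm)
  -- the subgradient inequality
  have hsub : ∀ θ' : EuclideanSpace ℝ (Fin d),
      Fplus V hV ε θ + ∑ i, (θ' - θ) i * (∫ z, f (θ + ε • z) ∂m) i ≤ Fplus V hV ε θ' := by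
    intro θ'
    have h2 : ∫ z, ∑ i, (θ' + ε • z) i * f (θ + ε • z) i ∂m ≤ Fplus V hV ε θ' :=
      integral_mono (hdot_int θ') (hsup_int θ') fun z =>
        Finset.le_sup' (fun w => ∑ i, (θ' + ε • z) i * w i) (hf_mem _)
    have h3 : (fun z : EuclideanSpace ℝ (Fin d) => ∑ i, (θ' + ε • z) i * f (θ + ε • z) i)
        = fun z => (∑ i, (θ + ε • z) i * f (θ + ε • z) i)
            + ∑ i, (θ' - θ) i * f (θ + ε • z) i := by
      funext z
      rw [← Finset.sum_add_distrib]
      refine Finset.sum_congr rfl fun i _ => ?_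
      simp only [PiLp.add_apply, PiLp.sub_apply, PiLp.smul_apply, smul_eq_mul]
      ring
    rw [h3, integral_add (hdot_int θ) (hcdot_int (θ' - θ))] at h2
    rw [hFθ, hdotI (θ' - θ)]
    exact h2
  -- value of Ω at the mean
  have hOmegaI : OmegaPlus V hV ε (∫ z, f (θ + ε • z) ∂m)
      = ((∑ i, θ i * (∫ z, f (θ + ε • z) ∂m) i - Fplus V hV ε θ : ℝ) : EReal) := by
    refine le_antisymm (iSup_le fun θ' => ?_) ?_
    · refine EReal.coe_le_coe_iff.mpr ?_
      have hd : ∑ i, (θ' - θ) i * (∫ z, f (θ + ε • z) ∂m) i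
          = ∑ i, θ' i * (∫ z, f (θ + ε • z) ∂m) i
            - ∑ i, θ i * (∫ z, f (θ + ε • z) ∂m) i := by
        rw [← Finset.sum_sub_distrib]
        refine Finset.sum_congr rfl fun i _ => ?_
        simp only [PiLp.sub_apply]
        ring
      have := hsub θ'
      rw [hd] at this
      linarith
    · exact le_iSup (fun θ' : EuclideanSpace ℝ (Fin d) =>
        ((∑ i, θ' i * (∫ z, f (θ + ε • z) ∂m) i - Fplus V hV ε θ' : ℝ) : EReal)) θ
  constructor
  · rw [hOmegaI, ← EReal.coe_add]
    norm_cast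
    ring
  · intro μ hμtop
    have hlow : ((∑ i, θ i * μ i - Fplus V hV ε θ : ℝ) : EReal) ≤ OmegaPlus V hV ε μ :=
      le_iSup (fun θ' : EuclideanSpace ℝ (Fin d) =>
        ((∑ i, θ' i * μ i - Fplus V hV ε θ' : ℝ) : EReal)) θ
    have hbot : OmegaPlus V hV ε μ ≠ ⊥ := by
      intro h
      rw [h, le_bot_iff] at hlow
      exact EReal.coe_ne_bot _ hlow
    obtain ⟨r, hr⟩ : ∃ r : ℝ, OmegaPlus V hV ε μ = (r : EReal) :=
      ⟨(OmegaPlus V hV ε μ).toReal, (EReal.coe_toReal hμtop hbot).symm⟩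
    rw [hr] at hlow
    rw [hr, hOmegaI, ← EReal.coe_sub, ← EReal.coe_sub]
    refine EReal.coe_le_coe_iff.mpr ?_
    have h1 : ∑ i, θ i * μ i - Fplus V hV ε θ ≤ r := EReal.coe_le_coe_iff.mp hlow
    linarith
end

section
/- Let ε > 0 and define the multiplicatively perturbed layer f̂ε⊙(θ) = ∫ f(θ ⊙ exp(εz − ε²𝟏/2)) dγ(z). Then f̂ε⊙ is differentiable at every θ ∈ ℝ^d with all components nonzero, and its Jacobian matrix at such θ has entries J_{ij} = (1/(ε θ_j)) ∫ (f(θ ⊙ exp(εz − ε²𝟏/2)))_i · z_j dγ(z). -/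
set_option maxHeartbeats 2000000

open scoped ENNReal NNReal RealInnerProductSpace
open MeasureTheory ProbabilityTheory Filter Metric Real

/-- The multiplicative perturbation `θ ⊙ exp(εz − ε²𝟏/2)`, with `i`-th component
`θ_i exp(ε z_i − ε²/2)`. -/
noncomputable def mpert {d : ℕ} (ε : ℝ) (θ z : EuclideanSpace ℝ (Fin d)) :
    EuclideanSpace ℝ (Fin d) :=
  WithLp.toLp 2 (fun i => θ i * Real.exp (ε * z i - ε ^ 2 / 2))

theorem lintegral_pi_prod : ∀ {n : ℕ} (μ : Fin n → Measure ℝ), (∀ i, SigmaFinite (μ i)) →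
    ∀ (h : Fin n → ℝ → ℝ≥0∞), (∀ i, Measurable (h i)) →
    ∫⁻ x, ∏ i, h i (x i) ∂Measure.pi μ = ∏ i, ∫⁻ x, h i x ∂μ i := by
  intro n
  induction n with
  | zero =>
    intro μ _ h _
    simp [lintegral_const, Measure.pi_univ]
  | succ n ih =>
    intro μ hsf h hm
    haveI := hsf
    have hp := (measurePreserving_piFinSuccAbove μ 0).symm
    rw [← hp.lintegral_comp (f := fun x => ∏ i, h i (x i))
      (by exact Finset.measurable_prod _ fun i _ => (hm i).comp (measurable_pi_apply i))]
    simp_rw [MeasurableEquiv.piFinSuccAbove_symm_apply, Fin.insertNthEquiv, Equiv.coe_fn_mk,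
      Fin.insertNth_zero, Fin.prod_univ_succ, Fin.cons_zero, Fin.cons_succ, cast_eq,
      Fin.zero_succAbove]
    rw [lintegral_prod_mul (f := h 0) (g := fun y : Fin n → ℝ => ∏ x, h x.succ (y x))
      ((hm 0).aemeasurable)
      ((Finset.measurable_prod _ fun i _ => (hm _).comp (measurable_pi_apply i)).aemeasurable)]
    rw [ih _ (fun i => hsf _) _ (fun i => hm _)]

theorem gauss_shift_1d (c : ℝ) :
    gaussianReal c 1 = (gaussianReal 0 1).withDensity
      (fun x => ENNReal.ofReal (rexp (c * x - c ^ 2 / 2))) := by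
  have h1 : (1 : NNReal) ≠ 0 := one_ne_zero
  have hpdf : gaussianPDF c 1 = (gaussianPDF 0 1) * fun x =>
      ENNReal.ofReal (rexp (c * x - c ^ 2 / 2)) := by
    funext x
    show gaussianPDF c 1 x = gaussianPDF 0 1 x * ENNReal.ofReal (rexp (c * x - c ^ 2 / 2))
    rw [gaussianPDF, gaussianPDF, ← ENNReal.ofReal_mul (gaussianPDFReal_nonneg _ _ _)]
    congr 1
    unfold gaussianPDFReal
    rw [mul_assoc _ (rexp _) (rexp _), ← Real.exp_add]
    congr 2
    push_cast
    ring
  rw [gaussianReal_of_var_ne_zero _ h1, gaussianReal_of_var_ne_zero _ h1, hpdf,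
    withDensity_mul _ (measurable_gaussianPDF 0 1)
      (by exact (ENNReal.measurable_ofReal.comp (by fun_prop)))]

theorem gauss_lint_exp (c : ℝ) :
    ∫⁻ x, ENNReal.ofReal (rexp (c * x - c ^ 2 / 2)) ∂(gaussianReal 0 1) = 1 := by
  have := (gauss_shift_1d c) ▸ (measure_univ (μ := gaussianReal c 1))
  rwa [withDensity_apply _ MeasurableSet.univ, Measure.restrict_univ] at this

theorem gauss_lint_exp_mul (c : ℝ) :
    ∫⁻ x, ENNReal.ofReal (rexp (c * x)) ∂(gaussianReal 0 1)
      = ENNReal.ofReal (rexp (c ^ 2 / 2)) := by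
  have h : ∀ x : ℝ, ENNReal.ofReal (rexp (c * x))
      = ENNReal.ofReal (rexp (c ^ 2 / 2)) * ENNReal.ofReal (rexp (c * x - c ^ 2 / 2)) := by
    intro x
    rw [← ENNReal.ofReal_mul (Real.exp_pos _).le, ← Real.exp_add]
    ring_nf
  simp_rw [h]
  rw [lintegral_const_mul' _ _ ENNReal.ofReal_ne_top, gauss_lint_exp, mul_one]

theorem pi_gauss_shift {d : ℕ} (t : Fin d → ℝ) :
    (Measure.pi fun _ : Fin d => gaussianReal 0 1).map (fun x => x + t) =
      (Measure.pi fun _ : Fin d => gaussianReal 0 1).withDensity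
        (fun x => ∏ i, ENNReal.ofReal (rexp (t i * x i - t i ^ 2 / 2))) := by
  have hdm : ∀ c : ℝ, Measurable (fun x : ℝ => ENNReal.ofReal (rexp (c * x - c ^ 2 / 2))) :=
    fun c => ENNReal.measurable_ofReal.comp (by fun_prop)
  have hmp : MeasurePreserving (fun (x : Fin d → ℝ) => x + t)
      (Measure.pi fun _ => gaussianReal 0 1) (Measure.pi fun i => gaussianReal (t i) 1) :=
    measurePreserving_pi (fun _ : Fin d => gaussianReal 0 1)
      (fun i => gaussianReal (t i) 1) (f := fun i x => x + t i)
      (fun i => ⟨measurable_id.add_const _, by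
        have h := gaussianReal_map_add_const (μ := 0) (v := 1) (t i)
        rwa [zero_add] at h⟩)
  rw [hmp.map_eq]
  refine Measure.pi_eq fun s hs => ?_
  rw [withDensity_apply _ (MeasurableSet.univ_pi hs), ← lintegral_indicator
    (MeasurableSet.univ_pi hs)
    (fun x : Fin d → ℝ => ∏ i, ENNReal.ofReal (rexp (t i * x i - t i ^ 2 / 2)))]
  have : (Set.univ.pi s).indicator
        (fun x : Fin d → ℝ => ∏ i, ENNReal.ofReal (rexp (t i * x i - t i ^ 2 / 2)))
      = fun x => ∏ i, (s i).indicator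
        (fun y => ENNReal.ofReal (rexp (t i * y - t i ^ 2 / 2))) (x i) := by
    funext x
    by_cases hx : x ∈ Set.univ.pi s
    · rw [Set.indicator_of_mem hx]
      exact Finset.prod_congr rfl fun i _ =>
        (Set.indicator_of_mem (hx i (Set.mem_univ i))
          (fun y => ENNReal.ofReal (rexp (t i * y - t i ^ 2 / 2)))).symm
    · rw [Set.indicator_of_notMem hx]
      simp only [Set.mem_pi, Set.mem_univ, forall_true_left, not_forall] at hx
      obtain ⟨i, hi⟩ := hx
      exact (Finset.prod_eq_zero (Finset.mem_univ i)
        (Set.indicator_of_notMem hi _)).symm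
  rw [this, lintegral_pi_prod _ (fun _ => inferInstance) _
    (fun i => ((hdm (t i)).indicator (hs i)))]
  refine Finset.prod_congr rfl fun i _ => ?_
  rw [lintegral_indicator (hs i) _, gauss_shift_1d (t i), withDensity_apply _ (hs i)]

theorem map_withDensity_equiv {α β : Type*} [MeasurableSpace α] [MeasurableSpace β]
    (ν : Measure α) (e : MeasurableEquiv α β) (g : β → ℝ≥0∞) (hg : Measurable g) :
    (ν.withDensity (fun x => g (e x))).map e = (ν.map e).withDensity g := by
  ext s hs
  rw [Measure.map_apply e.measurable hs, withDensity_apply _ (e.measurable hs),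
    withDensity_apply _ hs, setLIntegral_map hs hg e.measurable]

theorem euclid_inner_eq {d : ℕ} (t z : EuclideanSpace ℝ (Fin d)) :
    ⟪t, z⟫ = ∑ i, t i * z i := by
  rw [PiLp.inner_apply]
  simp [mul_comm]

theorem euclid_norm_sq_eq {d : ℕ} (t : EuclideanSpace ℝ (Fin d)) :
    ‖t‖ ^ 2 = ∑ i, t i ^ 2 := by
  rw [← real_inner_self_eq_norm_sq, euclid_inner_eq]
  exact Finset.sum_congr rfl fun i _ => (sq (t i)).symm

theorem stdGaussian_shift {d : ℕ} (t : EuclideanSpace ℝ (Fin d)) :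
    (stdGaussian d).map (fun z => z + t) = (stdGaussian d).withDensity
      (fun z => ENNReal.ofReal (Real.exp (⟪t, z⟫ - 2⁻¹ * ‖t‖ ^ 2))) := by
  set es := (MeasurableEquiv.toLp 2 (Fin d → ℝ)) with hes
  have hconv : ∀ z : EuclideanSpace ℝ (Fin d),
      ENNReal.ofReal (Real.exp (⟪t, z⟫ - 2⁻¹ * ‖t‖ ^ 2))
        = ∏ i, ENNReal.ofReal (rexp (t i * z i - t i ^ 2 / 2)) := by
    intro z
    rw [← ENNReal.ofReal_prod_of_nonneg (fun i _ => (Real.exp_pos _).le), ← Real.exp_sum]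
    congr 1
    rw [Finset.sum_sub_distrib, euclid_inner_eq, euclid_norm_sq_eq, ← Finset.sum_div]
    ring
  have h1 : (stdGaussian d).map (fun z => z + t)
      = ((Measure.pi fun _ : Fin d => gaussianReal 0 1).map
          (fun x => x + (fun i => t i))).map es := by
    rw [_root_.stdGaussian, Measure.map_map (measurable_add_const t) es.measurable,
      Measure.map_map es.measurable (measurable_add_const _)]
    rfl
  rw [h1, pi_gauss_shift]
  have hD : Measurable (fun z : EuclideanSpace ℝ (Fin d) =>
      ENNReal.ofReal (Real.exp (⟪t, z⟫ - 2⁻¹ * ‖t‖ ^ 2))) := by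
    apply ENNReal.measurable_ofReal.comp
    apply Continuous.measurable
    exact Real.continuous_exp.comp ((continuous_const.inner continuous_id).sub continuous_const)
  have h2 : (fun x : Fin d → ℝ => ∏ i, ENNReal.ofReal (rexp (t i * x i - t i ^ 2 / 2)))
      = fun x => ENNReal.ofReal (Real.exp (⟪t, es x⟫ - 2⁻¹ * ‖t‖ ^ 2)) := by
    funext x
    exact (hconv (es x)).symm
  rw [h2, map_withDensity_equiv _ es _ hD, ← _root_.stdGaussian]

instance stdGaussian_prob (d : ℕ) : IsProbabilityMeasure (stdGaussian d) :=
  Measure.isProbabilityMeasure_map (MeasurableEquiv.toLp 2 (Fin d → ℝ)).measurable.aemeasurable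

theorem euclid_norm_le_sum_abs {d : ℕ} (z : EuclideanSpace ℝ (Fin d)) :
    ‖z‖ ≤ ∑ i, |z i| := by
  rw [EuclideanSpace.norm_eq]
  have h1 : ∑ i, ‖z i‖ ^ 2 ≤ (∑ i, |z i|) ^ 2 := by
    simp_rw [Real.norm_eq_abs]
    exact Finset.sum_sq_le_sq_sum_of_nonneg fun i _ => abs_nonneg _
  calc √(∑ i, ‖z i‖ ^ 2) ≤ √((∑ i, |z i|) ^ 2) := Real.sqrt_le_sqrt h1
    _ = ∑ i, |z i| := Real.sqrt_sq (Finset.sum_nonneg fun i _ => abs_nonneg _)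

theorem integrable_exp_two_norm (d : ℕ) :
    Integrable (fun z : EuclideanSpace ℝ (Fin d) => rexp (2 * ‖z‖)) (stdGaussian d) := by
  have hcont : Continuous (fun z : EuclideanSpace ℝ (Fin d) => rexp (2 * ‖z‖)) :=
    Real.continuous_exp.comp ((continuous_const.mul continuous_norm))
  refine ⟨hcont.aestronglyMeasurable, ?_⟩
  rw [hasFiniteIntegral_iff_ofReal (ae_of_all _ fun z => (Real.exp_pos _).le)]
  rw [_root_.stdGaussian, lintegral_map_equiv]
  set es := (MeasurableEquiv.toLp 2 (Fin d → ℝ))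
  have hb : ∀ x : Fin d → ℝ, ENNReal.ofReal (rexp (2 * ‖es x‖))
      ≤ ∏ i, (ENNReal.ofReal (rexp (2 * x i)) + ENNReal.ofReal (rexp (-2 * x i))) := by
    intro x
    have h1 : rexp (2 * ‖es x‖) ≤ ∏ i, rexp (2 * |x i|) := by
      rw [← Real.exp_sum]
      apply Real.exp_le_exp.mpr
      rw [← Finset.mul_sum]
      have : ∑ i, |(es x) i| = ∑ i, |x i| := rfl
      exact mul_le_mul_of_nonneg_left ((euclid_norm_le_sum_abs (es x)).trans_eq this)
        (by norm_num)
    calc ENNReal.ofReal (rexp (2 * ‖es x‖)) ≤ ENNReal.ofReal (∏ i, rexp (2 * |x i|)) :=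
        ENNReal.ofReal_le_ofReal h1
      _ = ∏ i, ENNReal.ofReal (rexp (2 * |x i|)) :=
        ENNReal.ofReal_prod_of_nonneg fun i _ => (Real.exp_pos _).le
      _ ≤ ∏ i, (ENNReal.ofReal (rexp (2 * x i)) + ENNReal.ofReal (rexp (-2 * x i))) := by
        refine Finset.prod_le_prod' fun i _ => ?_
        rcases le_or_gt 0 (x i) with h | h
        · rw [abs_of_nonneg h]
          exact le_add_of_nonneg_right zero_le
        · rw [abs_of_neg h]
          rw [show 2 * -(x i) = -2 * x i by ring]
          exact le_add_of_nonneg_left zero_le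
  refine lt_of_le_of_lt (lintegral_mono hb) ?_
  have hmeas : ∀ c : ℝ, Measurable (fun y : ℝ => ENNReal.ofReal (rexp (c * y))) :=
    fun c => ENNReal.measurable_ofReal.comp (by fun_prop)
  rw [lintegral_pi_prod _ (fun _ => inferInstance)
    (fun _ y => ENNReal.ofReal (rexp (2 * y)) + ENNReal.ofReal (rexp (-2 * y)))
    (fun i => (hmeas 2).add (hmeas (-2)))]
  refine ENNReal.prod_lt_top fun i _ => ?_
  rw [lintegral_add_left (hmeas 2), gauss_lint_exp_mul, gauss_lint_exp_mul]
  exact ENNReal.add_lt_top.mpr ⟨ENNReal.ofReal_lt_top, ENNReal.ofReal_lt_top⟩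

/-- The multiplicatively perturbed layer `f̂ε⊙(θ) = ∫ f(θ ⊙ exp(εz − ε²𝟏/2)) dγ(z)` is
differentiable at every `θ` with all components nonzero, and its Jacobian there has entries
`J i j = (1/(ε θ_j)) ∫ f(θ ⊙ exp(εz − ε²𝟏/2))_i z_j dγ(z)`. -/
theorem stmt_6 {d : ℕ} (V : Finset (EuclideanSpace ℝ (Fin d))) (hV : V.Nonempty)
    (f : EuclideanSpace ℝ (Fin d) → EuclideanSpace ℝ (Fin d))
    (hf_meas : Measurable f) (hf_mem : ∀ u, f u ∈ V)
    (hf_max : ∀ u, ∑ i, u i * f u i = V.sup' hV (fun w => ∑ i, u i * w i))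
    (ε : ℝ) (hε : 0 < ε)
    (θ : EuclideanSpace ℝ (Fin d)) (hθ : ∀ i, θ i ≠ 0) :
    DifferentiableAt ℝ (fun θ' => ∫ z, f (mpert ε θ' z) ∂(stdGaussian d)) θ ∧
      ∀ i j, (fderiv ℝ (fun θ' => ∫ z, f (mpert ε θ' z) ∂(stdGaussian d)) θ)
          (EuclideanSpace.single j 1) i
        = (ε * θ j)⁻¹ * ∫ z, f (mpert ε θ z) i * z j ∂(stdGaussian d) := by
  classical
  obtain ⟨v₀, hv₀⟩ := hV
  set C : ℝ := V.sup' ⟨v₀, hv₀⟩ fun v => ‖v‖ with hCdef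
  have hC : ∀ v ∈ V, ‖v‖ ≤ C := fun v hv => Finset.le_sup' (fun v => ‖v‖) hv
  have hC0 : 0 ≤ C := le_trans (norm_nonneg v₀) (hC v₀ hv₀)
  have hmp_meas : ∀ θ₀ : EuclideanSpace ℝ (Fin d),
      Measurable fun z : EuclideanSpace ℝ (Fin d) => mpert ε θ₀ z := by
    intro θ₀
    unfold mpert
    exact (WithLp.measurable_toLp 2 _).comp (measurable_pi_lambda _ fun i =>
      ((((measurable_pi_apply i).comp (WithLp.measurable_ofLp 2 (Fin d → ℝ))).const_mul ε).sub
        measurable_const).exp.const_mul (θ₀ i))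
  set g : EuclideanSpace ℝ (Fin d) → EuclideanSpace ℝ (Fin d) :=
    fun z => f (mpert ε θ z) with hgdef
  have hg_meas : Measurable g := hf_meas.comp (hmp_meas θ)
  have hgasm : AEStronglyMeasurable g (stdGaussian d) := hg_meas.aestronglyMeasurable
  have hg_bdd : ∀ z, ‖g z‖ ≤ C := fun z => hC _ (hf_mem _)
  have hg_int : Integrable g (stdGaussian d) :=
    (integrable_const C).mono' hgasm (ae_of_all _ hg_bdd)
  -- exponential weight
  set W : EuclideanSpace ℝ (Fin d) → EuclideanSpace ℝ (Fin d) → ℝ :=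
    fun t z => rexp (⟪t, z⟫ - 2⁻¹ * ‖t‖ ^ 2) with hWdef
  -- shift map
  set T : EuclideanSpace ℝ (Fin d) → EuclideanSpace ℝ (Fin d) :=
    fun θ' => WithLp.toLp 2 (fun i => Real.log (θ' i / θ i) / ε) with hTdef
  have hTθ : T θ = 0 := by
    ext i
    show Real.log (θ i / θ i) / ε = 0
    rw [div_self (hθ i), Real.log_one, zero_div]
  have hpt : ∀ θ' : EuclideanSpace ℝ (Fin d), (∀ i, 0 < θ' i / θ i) →
      ∀ z, mpert ε θ' z = mpert ε θ (z + T θ') := by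
    intro θ' hs z
    ext i
    show θ' i * rexp (ε * z i - ε ^ 2 / 2) = θ i * rexp (ε * (z + T θ') i - ε ^ 2 / 2)
    have hzi : (z + T θ') i = z i + Real.log (θ' i / θ i) / ε := rfl
    rw [hzi]
    have harg : ε * (z i + Real.log (θ' i / θ i) / ε) - ε ^ 2 / 2
        = (ε * z i - ε ^ 2 / 2) + Real.log (θ' i / θ i) := by
      field_simp
      ring
    rw [harg, Real.exp_add, Real.exp_log (hs i)]
    field_simp [hθ i]
  have hnb : ∀ᶠ θ' in nhds θ, ∀ i, 0 < θ' i / θ i := by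
    rw [eventually_all]
    intro i
    have hc : ContinuousAt (fun θ' : EuclideanSpace ℝ (Fin d) => θ' i / θ i) θ :=
      ((EuclideanSpace.proj (𝕜 := ℝ) i).continuous.continuousAt).div_const (θ i)
    have h1 : θ i / θ i = 1 := div_self (hθ i)
    have hc' : Tendsto (fun θ' : EuclideanSpace ℝ (Fin d) => θ' i / θ i) (nhds θ) (nhds 1) := by
      rw [← h1]; exact hc
    exact hc'.eventually (eventually_gt_nhds zero_lt_one)
  -- integrability facts
  have hr_le : ∀ r : ℝ, 0 ≤ r → r ≤ rexp (2 * r) := by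
    intro r hr
    have h1 := Real.add_one_le_exp r
    have h2 : rexp r ≤ rexp (2 * r) := Real.exp_le_exp.mpr (by linarith)
    linarith
  have habs_le : ∀ (z : EuclideanSpace ℝ (Fin d)) (j : Fin d), |z j| ≤ ‖z‖ := by
    intro z j
    rw [EuclideanSpace.norm_eq]
    rw [← Real.sqrt_sq_eq_abs]
    apply Real.sqrt_le_sqrt
    refine Finset.single_le_sum (f := fun i => ‖z i‖ ^ 2) (fun i _ => sq_nonneg _)
      (Finset.mem_univ j) |>.trans_eq' ?_
    rw [Real.norm_eq_abs, sq_abs]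
  have hbound_int : Integrable
      (fun z : EuclideanSpace ℝ (Fin d) => C * ((‖z‖ + 1) * rexp ‖z‖)) (stdGaussian d) := by
    refine ((integrable_exp_two_norm d).const_mul C).mono'
      ((continuous_const.mul ((continuous_norm.add continuous_const).mul
        (Real.continuous_exp.comp continuous_norm))).aestronglyMeasurable)
      (ae_of_all _ fun z => ?_)
    rw [Real.norm_eq_abs, abs_of_nonneg (by positivity)]
    have h1 : ‖z‖ + 1 ≤ rexp ‖z‖ := by linarith [Real.add_one_le_exp ‖z‖]
    have h2 : (‖z‖ + 1) * rexp ‖z‖ ≤ rexp (2 * ‖z‖) := by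
      calc (‖z‖ + 1) * rexp ‖z‖ ≤ rexp ‖z‖ * rexp ‖z‖ :=
            mul_le_mul_of_nonneg_right h1 (Real.exp_pos _).le
        _ = rexp (2 * ‖z‖) := by rw [← Real.exp_add]; ring_nf
    exact mul_le_mul_of_nonneg_left h2 hC0
  -- the derivative integrand
  set F' : EuclideanSpace ℝ (Fin d) → EuclideanSpace ℝ (Fin d) →
      (EuclideanSpace ℝ (Fin d) →L[ℝ] EuclideanSpace ℝ (Fin d)) :=
    fun t z => ((W t z) • (innerSL ℝ z - innerSL ℝ t)).smulRight (g z) with hF'def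
  have hW_deriv : ∀ (z t : EuclideanSpace ℝ (Fin d)),
      HasFDerivAt (fun t' => W t' z • g z) (F' t z) t := by
    intro z t
    have h1 : HasFDerivAt (fun t' : EuclideanSpace ℝ (Fin d) => ⟪t', z⟫) (innerSL ℝ z) t := by
      have he : (fun t' : EuclideanSpace ℝ (Fin d) => ⟪t', z⟫)
          = fun t' => (innerSL ℝ z) t' := funext fun t' => real_inner_comm _ _
      rw [he]
      exact (innerSL ℝ z).hasFDerivAt
    have h2 : HasFDerivAt (fun t' : EuclideanSpace ℝ (Fin d) => 2⁻¹ * ‖t'‖ ^ 2)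
        (innerSL ℝ t) t := by
      have h3 := (hasStrictFDerivAt_norm_sq t).hasFDerivAt.const_mul (2⁻¹ : ℝ)
      refine h3.congr_fderiv ?_
      ext y
      simp only [ContinuousLinearMap.smul_apply, smul_eq_mul, nsmul_eq_mul, Nat.cast_ofNat]
      ring
    exact ((h1.sub h2).exp).smul_const (g z)
  have hF'_bound : ∀ (t z : EuclideanSpace ℝ (Fin d)), ‖t‖ ≤ 1 →
      ‖F' t z‖ ≤ C * ((‖z‖ + 1) * rexp ‖z‖) := by
    intro t z ht
    have hWle : W t z ≤ rexp ‖z‖ := by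
      apply Real.exp_le_exp.mpr
      have h4 : ⟪t, z⟫ ≤ ‖t‖ * ‖z‖ := real_inner_le_norm t z
      have h5 : ‖t‖ * ‖z‖ ≤ 1 * ‖z‖ := mul_le_mul_of_nonneg_right ht (norm_nonneg z)
      have h6 : (0:ℝ) ≤ 2⁻¹ * ‖t‖ ^ 2 := by positivity
      linarith
    have h7 : ‖F' t z‖ = |W t z| * ‖innerSL ℝ z - innerSL ℝ t‖ * ‖g z‖ := by
      rw [hF'def]
      rw [ContinuousLinearMap.norm_smulRight_apply, norm_smul, Real.norm_eq_abs]
    rw [h7, abs_of_nonneg (Real.exp_pos _).le]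
    have h8 : ‖innerSL ℝ z - innerSL ℝ t‖ ≤ ‖z‖ + 1 := by
      calc ‖innerSL ℝ z - innerSL ℝ t‖ ≤ ‖innerSL ℝ z‖ + ‖innerSL ℝ t‖ := norm_sub_le _ _
        _ = ‖z‖ + ‖t‖ := by rw [innerSL_apply_norm, innerSL_apply_norm]
        _ ≤ ‖z‖ + 1 := by linarith
    calc W t z * ‖innerSL ℝ z - innerSL ℝ t‖ * ‖g z‖
        ≤ rexp ‖z‖ * (‖z‖ + 1) * C := by
          apply mul_le_mul
          · exact mul_le_mul hWle h8 (norm_nonneg _) (Real.exp_pos _).le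
          · exact hg_bdd z
          · exact norm_nonneg _
          · positivity
      _ = C * ((‖z‖ + 1) * rexp ‖z‖) := by ring
  have hWasm : ∀ t : EuclideanSpace ℝ (Fin d),
      AEStronglyMeasurable (fun z => W t z • g z) (stdGaussian d) := by
    intro t
    exact ((Real.continuous_exp.comp ((continuous_const.inner continuous_id).sub
      continuous_const)).aestronglyMeasurable).smul hgasm
  have hF'meas : AEStronglyMeasurable (F' 0) (stdGaussian d) := by
    have hsm : StronglyMeasurable (fun z : EuclideanSpace ℝ (Fin d) => (z, g z)) :=
      (measurable_id.prodMk hg_meas).stronglyMeasurable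
    have hc1 : Continuous (fun p : EuclideanSpace ℝ (Fin d) × EuclideanSpace ℝ (Fin d) =>
        ((W 0 p.1 • (innerSL ℝ p.1 - innerSL ℝ (0 : EuclideanSpace ℝ (Fin d)))) :
          EuclideanSpace ℝ (Fin d) →L[ℝ] ℝ)) := by
      apply Continuous.fun_smul
      · exact Real.continuous_exp.comp ((continuous_const.inner continuous_fst).sub
          continuous_const)
      · exact ((innerSL ℝ).continuous.comp continuous_fst).sub continuous_const
    have hc2 : Continuous (fun p : EuclideanSpace ℝ (Fin d) × EuclideanSpace ℝ (Fin d) =>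
        (((W 0 p.1 • (innerSL ℝ p.1 - innerSL ℝ (0 : EuclideanSpace ℝ (Fin d)))).smulRight p.2) :
          EuclideanSpace ℝ (Fin d) →L[ℝ] EuclideanSpace ℝ (Fin d))) := by
      have := (ContinuousLinearMap.smulRightL ℝ (EuclideanSpace ℝ (Fin d))
        (EuclideanSpace ℝ (Fin d))).continuous₂
      exact this.comp (hc1.prodMk continuous_snd)
    exact ((hc2.comp_stronglyMeasurable hsm).aestronglyMeasurable)
  have hF_int : Integrable (fun z => W 0 z • g z) (stdGaussian d) := by
    have he : (fun z => W 0 z • g z) = g := by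
      funext z
      rw [hWdef]
      simp
    rw [he]
    exact hg_int
  have key := hasFDerivAt_integral_of_dominated_of_fderiv_le (𝕜 := ℝ) (μ := stdGaussian d)
    (F := fun t z => W t z • g z) (F' := F') (x₀ := 0)
    (bound := fun z => C * ((‖z‖ + 1) * rexp ‖z‖)) (ball_mem_nhds 0 zero_lt_one)
    (Eventually.of_forall hWasm) hF_int hF'meas
    (ae_of_all _ fun z t ht => hF'_bound t z (by
      rw [mem_ball, dist_zero_right] at ht
      exact ht.le))
    hbound_int
    (ae_of_all _ fun z t _ => hW_deriv z t)
  have hF'int : Integrable (F' 0) (stdGaussian d) :=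
    hbound_int.mono' hF'meas (ae_of_all _ fun z => hF'_bound 0 z (by simp))
  -- derivative of T
  set DT : EuclideanSpace ℝ (Fin d) →L[ℝ] EuclideanSpace ℝ (Fin d) :=
    ((PiLp.continuousLinearEquiv 2 ℝ (fun _ : Fin d => ℝ)).symm.toContinuousLinearMap).comp
      (ContinuousLinearMap.pi fun i => ((ε * θ i)⁻¹) • (EuclideanSpace.proj (𝕜 := ℝ) i))
    with hDTdef
  have hT : HasFDerivAt T DT θ := by
    have h1 : ∀ i : Fin d, HasFDerivAt (fun θ' : EuclideanSpace ℝ (Fin d) =>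
        Real.log (θ' i / θ i) / ε)
        (((ε * θ i)⁻¹) • (EuclideanSpace.proj (𝕜 := ℝ) i)) θ := by
      intro i
      have hd : HasDerivAt (fun y : ℝ => Real.log (y / θ i) / ε) ((ε * θ i)⁻¹) (θ i) := by
        have h2 : HasDerivAt (fun y : ℝ => (Real.log y - Real.log (θ i)) / ε)
            ((θ i)⁻¹ / ε) (θ i) := ((Real.hasDerivAt_log (hθ i)).sub_const _).div_const ε
        have h3 : (fun y : ℝ => (Real.log y - Real.log (θ i)) / ε)
            =ᶠ[nhds (θ i)] fun y => Real.log (y / θ i) / ε := by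
          filter_upwards [eventually_ne_nhds (hθ i)] with y hy
          rw [Real.log_div hy (hθ i)]
        have h4 := h2.congr_of_eventuallyEq h3.symm
        refine h4.congr_deriv ?_
        rw [mul_inv, div_eq_mul_inv, mul_comm]
      exact hd.comp_hasFDerivAt θ (EuclideanSpace.proj (𝕜 := ℝ) i).hasFDerivAt
    have h6 : HasFDerivAt (fun θ' : EuclideanSpace ℝ (Fin d) =>
        (fun i => Real.log (θ' i / θ i) / ε : Fin d → ℝ))
        (ContinuousLinearMap.pi fun i => ((ε * θ i)⁻¹) • (EuclideanSpace.proj (𝕜 := ℝ) i)) θ := by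
      apply hasFDerivAt_pi''
      intro i
      rw [ContinuousLinearMap.proj_pi]
      exact h1 i
    exact ((PiLp.continuousLinearEquiv 2 ℝ
      (fun _ : Fin d => ℝ)).symm.toContinuousLinearMap.hasFDerivAt).comp θ h6
  have key2 : HasFDerivAt (fun t => ∫ z, W t z • g z ∂(stdGaussian d))
      (∫ z, F' 0 z ∂(stdGaussian d)) (T θ) := by
    rw [hTθ]
    exact key
  have hGT := key2.comp θ hT
  have hF_ev : (fun θ' => ∫ z, f (mpert ε θ' z) ∂(stdGaussian d))
      =ᶠ[nhds θ] (fun θ' => ∫ z, W (T θ') z • g z ∂(stdGaussian d)) := by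
    filter_upwards [hnb] with θ' hs
    have h8 : ∀ z, f (mpert ε θ' z) = g (z + T θ') := fun z => by
      rw [hpt θ' hs z]
    calc ∫ z, f (mpert ε θ' z) ∂(stdGaussian d)
        = ∫ z, g (z + T θ') ∂(stdGaussian d) := integral_congr_ae (ae_of_all _ h8)
      _ = ∫ z, g z ∂((stdGaussian d).map (fun z => z + T θ')) :=
          (integral_map (measurable_add_const (T θ')).aemeasurable
            hg_meas.aestronglyMeasurable).symm
      _ = ∫ z, g z ∂((stdGaussian d).withDensity fun z => ENNReal.ofReal (W (T θ') z)) := by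
          rw [stdGaussian_shift]
      _ = ∫ z, W (T θ') z • g z ∂(stdGaussian d) := by
          rw [show (fun z => ENNReal.ofReal (W (T θ') z))
            = (fun z => ((W (T θ') z).toNNReal : ℝ≥0∞)) from rfl]
          rw [integral_withDensity_eq_integral_smul
            (by exact (Real.continuous_exp.comp ((continuous_const.inner continuous_id).sub
              continuous_const)).measurable.real_toNNReal) g]
          refine integral_congr_ae (ae_of_all _ fun z => ?_)
          show (W (T θ') z).toNNReal • g z = W (T θ') z • g z
          rw [NNReal.smul_def, Real.coe_toNNReal _ (Real.exp_pos _).le]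
  have hMain : HasFDerivAt (fun θ' => ∫ z, f (mpert ε θ' z) ∂(stdGaussian d))
      ((∫ z, F' 0 z ∂(stdGaussian d)).comp DT) θ :=
    hGT.congr_of_eventuallyEq hF_ev
  refine ⟨hMain.differentiableAt, ?_⟩
  intro i j
  rw [hMain.fderiv]
  have hDTs : DT (EuclideanSpace.single j 1)
      = (ε * θ j)⁻¹ • (EuclideanSpace.single j (1:ℝ)) := by
    ext k
    show (ε * θ k)⁻¹ * (EuclideanSpace.single j (1:ℝ)) k
        = (ε * θ j)⁻¹ * (EuclideanSpace.single j (1:ℝ)) k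
    rw [EuclideanSpace.single_apply]
    by_cases hkj : k = j
    · rw [hkj]
    · simp [hkj]
  rw [ContinuousLinearMap.comp_apply, hDTs, ContinuousLinearMap.map_smul]
  have hint1 : Integrable (fun z : EuclideanSpace ℝ (Fin d) => (z j) • g z) (stdGaussian d) := by
    refine ((integrable_exp_two_norm d).const_mul C).mono'
      ((((EuclideanSpace.proj (𝕜 := ℝ) j).continuous.measurable).smul hg_meas).aestronglyMeasurable)
      (ae_of_all _ fun z => ?_)
    rw [norm_smul, Real.norm_eq_abs]
    calc |z j| * ‖g z‖ ≤ ‖z‖ * C :=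
        mul_le_mul (habs_le z j) (hg_bdd z) (norm_nonneg _) (norm_nonneg _)
      _ ≤ rexp (2 * ‖z‖) * C :=
        mul_le_mul_of_nonneg_right (hr_le _ (norm_nonneg _)) hC0
      _ = C * rexp (2 * ‖z‖) := mul_comm _ _
  have happ : (fun z => F' 0 z (EuclideanSpace.single j 1))
      = fun z : EuclideanSpace ℝ (Fin d) => (z j) • g z := by
    funext z
    rw [hF'def]
    rw [ContinuousLinearMap.smulRight_apply]
    congr 1
    rw [ContinuousLinearMap.smul_apply, ContinuousLinearMap.sub_apply]
    have hw0 : W 0 z = 1 := by rw [hWdef]; simp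
    have hz1 : (innerSL ℝ z) (EuclideanSpace.single j (1:ℝ)) = z j := by
      simp [innerSL_apply_apply, EuclideanSpace.inner_single_right]
    have hz2 : (innerSL ℝ (0 : EuclideanSpace ℝ (Fin d)))
        (EuclideanSpace.single j (1:ℝ)) = 0 := by simp
    rw [hw0, hz1, hz2, sub_zero, one_smul]
  have hsmul_i : ((ε * θ j)⁻¹ • ((∫ z, F' 0 z ∂(stdGaussian d))
      (EuclideanSpace.single j (1:ℝ)))) i
      = (ε * θ j)⁻¹ * ((∫ z, F' 0 z ∂(stdGaussian d)) (EuclideanSpace.single j (1:ℝ))) i := rfl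
  rw [hsmul_i, ContinuousLinearMap.integral_apply hF'int, happ]
  have hcomp : (∫ z, (z j) • g z ∂(stdGaussian d)) i
      = ∫ z, ((z j) • g z) i ∂(stdGaussian d) :=
    ((EuclideanSpace.proj (𝕜 := ℝ) i).integral_comp_comm hint1).symm
  rw [hcomp]
  have hcc : (fun z : EuclideanSpace ℝ (Fin d) => ((z j) • g z) i)
      = fun z => f (mpert ε θ z) i * z j := by
    funext z
    show z j * g z i = f (mpert ε θ z) i * z j
    rw [hgdef]
    ring
  rw [hcc]
end

section
/- Let ε > 0, define Fε⊙(θ) = ∫ max_{v ∈ V} (θ ⊙ exp(εz − ε²𝟏/2)) · v dγ(z), Ωε⊙(μ) = sup_{θ' ∈ ℝ^d} (θ' · μ − Fε⊙(θ')), and f̂ε⊙scaled(θ) = ∫ exp(εz − ε²𝟏/2) ⊙ f(θ ⊙ exp(εz − ε²𝟏/2)) dγ(z). Then Ωε⊙ is convex, and for every θ ∈ ℝ^d the Fenchel equality Fε⊙(θ) + Ωε⊙(f̂ε⊙scaled(θ)) = θ · f̂ε⊙scaled(θ) holds, so that f̂ε⊙scaled(θ) maximizes μ ↦ θ · μ −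 Ωε⊙(μ) over all μ with Ωε⊙(μ) < +∞. -/
open MeasureTheory ProbabilityTheory

/-- `Fε⊙(θ) = ∫ max_{v ∈ V} (θ ⊙ exp(εz − ε²𝟏/2))·v dγ(z)`. -/
noncomputable def Fmul {d : ℕ} (V : Finset (EuclideanSpace ℝ (Fin d))) (hV : V.Nonempty)
    (ε : ℝ) (θ : EuclideanSpace ℝ (Fin d)) : ℝ :=
  ∫ z, V.sup' hV (fun w => ∑ i, mpert ε θ z i * w i) ∂(stdGaussian d)

/-- `Ωε⊙(μ) = sup_θ' (θ'·μ − Fε⊙(θ'))`, with values in `ℝ ∪ {+∞}` (here `EReal`). -/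
noncomputable def OmegaMul {d : ℕ} (V : Finset (EuclideanSpace ℝ (Fin d))) (hV : V.Nonempty)
    (ε : ℝ) (μ : EuclideanSpace ℝ (Fin d)) : EReal :=
  ⨆ θ' : EuclideanSpace ℝ (Fin d), ((∑ i, θ' i * μ i - Fmul V hV ε θ' : ℝ) : EReal)

/-- The scaled multiplicative layer
`f̂ε⊙scaled(θ) = ∫ exp(εz − ε²𝟏/2) ⊙ f(θ ⊙ exp(εz − ε²𝟏/2)) dγ(z)`. -/
noncomputable def fmulScaled {d : ℕ} (f : EuclideanSpace ℝ (Fin d) → EuclideanSpace ℝ (Fin d))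
    (ε : ℝ) (θ : EuclideanSpace ℝ (Fin d)) : EuclideanSpace ℝ (Fin d) :=
  ∫ z, (WithLp.toLp 2 (fun i => Real.exp (ε * z i - ε ^ 2 / 2) * f (mpert ε θ z) i) :
    EuclideanSpace ℝ (Fin d)) ∂(stdGaussian d)

namespace Stmt8Aux

lemma integrable_exp_gaussian (c : ℝ) :
    Integrable (fun x => Real.exp (c * x)) (gaussianReal 0 1) := by
  rw [gaussianReal_of_var_ne_zero _ one_ne_zero]
  rw [integrable_withDensity_iff (measurable_gaussianPDF _ _)
    (Filter.Eventually.of_forall fun x => ENNReal.ofReal_lt_top)]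
  have : ∀ x : ℝ, Real.exp (c * x) * (gaussianPDF 0 1 x).toReal
      = (Real.sqrt (2 * Real.pi))⁻¹ * Real.exp (c ^ 2 / 2)
        * Real.exp (-(1 / 2) * (x - c) ^ 2) := by
    intro x
    rw [gaussianPDF, ENNReal.toReal_ofReal (gaussianPDFReal_nonneg _ _ _), gaussianPDFReal]
    simp only [NNReal.coe_one, mul_one, sub_zero]
    rw [mul_comm, mul_assoc, mul_assoc, ← Real.exp_add, ← Real.exp_add]
    congr 1
    ring
  simp only [this]
  exact ((integrable_exp_neg_mul_sq (by norm_num : (0:ℝ) < 1/2)).comp_sub_right c).const_mul _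

lemma pi_map_eval {d : ℕ} (μ : Fin d → Measure ℝ) [∀ i, IsProbabilityMeasure (μ i)] (i : Fin d) :
    (Measure.pi μ).map (Function.eval i) = μ i := by
  ext s hs
  rw [Measure.map_apply (measurable_pi_apply i) hs]
  have : Function.eval i ⁻¹' s
      = Set.pi Set.univ (Function.update (fun _ : Fin d => (Set.univ : Set ℝ)) i s) := by
    ext x
    simp only [Set.mem_preimage, Set.mem_pi, Set.mem_univ, forall_true_left, Function.eval]
    constructor
    · intro h j
      rcases eq_or_ne j i with rfl | hj
      · simpa using h
      · simp [Function.update, hj]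
    · intro h; have := h i; simpa using this
  rw [this, Measure.pi_pi]
  rw [Finset.prod_eq_single i]
  · simp
  · intro j _ hj; simp [Function.update, hj]
  · simp

lemma integrable_eval_comp {d : ℕ} (μ : Fin d → Measure ℝ) [∀ i, IsProbabilityMeasure (μ i)]
    (i : Fin d) {g : ℝ → ℝ} (hgi : Integrable g (μ i)) :
    Integrable (fun x : Fin d → ℝ => g (x i)) (Measure.pi μ) := by
  have hp : MeasurePreserving (Function.eval i) (Measure.pi μ) (μ i) :=
    ⟨measurable_pi_apply i, pi_map_eval μ i⟩
  exact (hp.integrable_comp hgi.1).mpr hgi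

instance (d : ℕ) : IsProbabilityMeasure (stdGaussian d) := by
  unfold _root_.stdGaussian
  exact Measure.isProbabilityMeasure_map (Measurable.aemeasurable (MeasurableEquiv.measurable _))

lemma measurable_expz {d : ℕ} (ε : ℝ) (i : Fin d) :
    Measurable (fun z : EuclideanSpace ℝ (Fin d) => Real.exp (ε * z i - ε ^ 2 / 2)) := by
  have h : Measurable (fun z : EuclideanSpace ℝ (Fin d) => z i) :=
    (measurable_pi_apply i).comp (WithLp.measurable_ofLp 2 _)
  fun_prop

lemma integrable_expz {d : ℕ} (ε : ℝ) (i : Fin d) :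
    Integrable (fun z : EuclideanSpace ℝ (Fin d) => Real.exp (ε * z i - ε ^ 2 / 2))
      (stdGaussian d) := by
  have h1 : Integrable (fun z : EuclideanSpace ℝ (Fin d) => Real.exp (ε * z i))
      (stdGaussian d) := by
    unfold _root_.stdGaussian
    rw [integrable_map_equiv]
    exact integrable_eval_comp (fun _ : Fin d => gaussianReal 0 1) i (integrable_exp_gaussian ε)
  have : (fun z : EuclideanSpace ℝ (Fin d) => Real.exp (ε * z i - ε ^ 2 / 2))
      = fun z => Real.exp (ε * z i) * Real.exp (-(ε ^ 2 / 2)) := by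
    funext z; rw [← Real.exp_add]; ring_nf
  rw [this]
  exact h1.mul_const _

lemma measurable_mpert {d : ℕ} (ε : ℝ) (θ : EuclideanSpace ℝ (Fin d)) :
    Measurable (fun z : EuclideanSpace ℝ (Fin d) => mpert ε θ z) := by
  unfold mpert
  exact (WithLp.measurable_toLp 2 _).comp
    (measurable_pi_lambda _ fun i => measurable_const.mul (measurable_expz ε i))

/-- integrability of the component integrand of `fmulScaled`. -/
lemma integrable_h {d : ℕ} (V : Finset (EuclideanSpace ℝ (Fin d))) (hV : V.Nonempty)
    (f : EuclideanSpace ℝ (Fin d) → EuclideanSpace ℝ (Fin d))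
    (hf_meas : Measurable f) (hf_mem : ∀ u, f u ∈ V)
    (ε : ℝ) (θ : EuclideanSpace ℝ (Fin d)) (i : Fin d) :
    Integrable (fun z : EuclideanSpace ℝ (Fin d) =>
      Real.exp (ε * z i - ε ^ 2 / 2) * f (mpert ε θ z) i) (stdGaussian d) := by
  set C := V.sup' hV (fun v => |v i|) with hC
  have hmeas : Measurable (fun z : EuclideanSpace ℝ (Fin d) =>
      Real.exp (ε * z i - ε ^ 2 / 2) * f (mpert ε θ z) i) :=
    (measurable_expz ε i).mul
      ((measurable_pi_apply i).comp ((WithLp.measurable_ofLp 2 _).comp (hf_meas.comp (measurable_mpert ε θ))))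
  refine Integrable.mono' ((integrable_expz ε i).const_mul C) hmeas.aestronglyMeasurable ?_
  refine Filter.Eventually.of_forall fun z => ?_
  have hb : |f (mpert ε θ z) i| ≤ C := Finset.le_sup' (fun v => |v i|) (hf_mem (mpert ε θ z))
  have hpos : 0 ≤ Real.exp (ε * z i - ε ^ 2 / 2) := (Real.exp_pos _).le
  calc ‖Real.exp (ε * z i - ε ^ 2 / 2) * f (mpert ε θ z) i‖
      = Real.exp (ε * z i - ε ^ 2 / 2) * |f (mpert ε θ z) i| := by
        rw [Real.norm_eq_abs, abs_mul, abs_of_nonneg hpos]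
    _ ≤ Real.exp (ε * z i - ε ^ 2 / 2) * C := mul_le_mul_of_nonneg_left hb hpos
    _ = C * Real.exp (ε * z i - ε ^ 2 / 2) := mul_comm _ _

/-- integrability of the linear functional `z ↦ ⟨mpert ε θ z, w⟩`. -/
lemma integrable_lin {d : ℕ} (ε : ℝ) (θ w : EuclideanSpace ℝ (Fin d)) :
    Integrable (fun z : EuclideanSpace ℝ (Fin d) => ∑ i, mpert ε θ z i * w i)
      (stdGaussian d) := by
  have : (fun z : EuclideanSpace ℝ (Fin d) => ∑ i, mpert ε θ z i * w i)
      = fun z => ∑ i, (θ i * w i) * Real.exp (ε * z i - ε ^ 2 / 2) := by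
    funext z
    refine Finset.sum_congr rfl fun i _ => ?_
    simp only [mpert, PiLp.toLp_apply]; ring
  rw [this]
  exact integrable_finset_sum _ fun i _ => (integrable_expz ε i).const_mul _

lemma measurable_lin {d : ℕ} (ε : ℝ) (θ w : EuclideanSpace ℝ (Fin d)) :
    Measurable (fun z : EuclideanSpace ℝ (Fin d) => ∑ i, mpert ε θ z i * w i) :=
  Finset.measurable_sum _ fun i _ => by
    simp only [mpert, PiLp.toLp_apply]
    exact (measurable_const.mul (measurable_expz ε i)).mul measurable_const

/-- integrability of the sup' integrand of `Fmul`. -/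
lemma integrable_sup {d : ℕ} (V : Finset (EuclideanSpace ℝ (Fin d))) (hV : V.Nonempty)
    (ε : ℝ) (θ : EuclideanSpace ℝ (Fin d)) :
    Integrable (fun z : EuclideanSpace ℝ (Fin d) =>
      V.sup' hV (fun w => ∑ i, mpert ε θ z i * w i)) (stdGaussian d) := by
  have hV' := hV
  obtain ⟨w₀, hw₀⟩ := hV'
  have hmeas : Measurable (fun z : EuclideanSpace ℝ (Fin d) =>
      V.sup' hV (fun w => ∑ i, mpert ε θ z i * w i)) := by
    have he : (fun z : EuclideanSpace ℝ (Fin d) =>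
        V.sup' hV (fun w => ∑ i, mpert ε θ z i * w i))
        = V.sup' hV (fun w => fun z : EuclideanSpace ℝ (Fin d) => ∑ i, mpert ε θ z i * w i) := by
      funext z; rw [Finset.sup'_apply]
    rw [he]
    exact Finset.measurable_sup' hV fun w _ => measurable_lin ε θ w
  have hG : Integrable (fun z : EuclideanSpace ℝ (Fin d) =>
      ∑ w ∈ V, |∑ i, mpert ε θ z i * w i|) (stdGaussian d) :=
    integrable_finset_sum _ fun w _ => (integrable_lin ε θ w).abs
  refine Integrable.mono' hG hmeas.aestronglyMeasurable ?_
  refine Filter.Eventually.of_forall fun z => ?_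
  rw [Real.norm_eq_abs, abs_le]
  constructor
  · calc -(∑ w ∈ V, |∑ i, mpert ε θ z i * w i|)
        ≤ -|∑ i, mpert ε θ z i * w₀ i| := by
          apply neg_le_neg
          exact Finset.single_le_sum (f := fun w => |∑ i, mpert ε θ z i * w i|)
            (fun w _ => abs_nonneg _) hw₀
      _ ≤ ∑ i, mpert ε θ z i * w₀ i := neg_abs_le _
      _ ≤ V.sup' hV (fun w => ∑ i, mpert ε θ z i * w i) :=
          Finset.le_sup' (f := fun w => ∑ i, mpert ε θ z i * w i) hw₀
  · apply Finset.sup'_le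
    intro w hw
    calc (∑ i, mpert ε θ z i * w i) ≤ |∑ i, mpert ε θ z i * w i| := le_abs_self _
      _ ≤ ∑ w ∈ V, |∑ i, mpert ε θ z i * w i| :=
          Finset.single_le_sum (f := fun w => |∑ i, mpert ε θ z i * w i|)
            (fun w _ => abs_nonneg _) hw


lemma integral_apply_eucl {d : ℕ} (g : EuclideanSpace ℝ (Fin d) → EuclideanSpace ℝ (Fin d))
    (hg : ∀ j, Integrable (fun z => g z j) (stdGaussian d)) (i : Fin d) :
    (∫ z, g z ∂(stdGaussian d)) i = ∫ z, g z i ∂(stdGaussian d) := by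
  have hrw : (fun z => g z) = fun z => ∑ j, (g z j) • (EuclideanSpace.single j (1:ℝ)) := by
    funext z
    ext k
    rw [show (∑ x : Fin d, g z x • EuclideanSpace.single x (1:ℝ)) k
        = ∑ x : Fin d, (g z x • EuclideanSpace.single x (1:ℝ)) k from
      by rw [WithLp.ofLp_sum, Finset.sum_apply]]
    simp [EuclideanSpace.single_apply, PiLp.smul_apply]
  rw [hrw, integral_finset_sum _ fun j _ => (hg j).smul_const _]
  have : ∀ j, (∫ z, (g z j) • (EuclideanSpace.single j (1:ℝ)) ∂(stdGaussian d))
      = (∫ z, g z j ∂(stdGaussian d)) • EuclideanSpace.single j (1:ℝ) := fun j =>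
    integral_smul_const _ _
  simp only [this]
  rw [show (∑ x : Fin d, (∫ z, g z x ∂(stdGaussian d)) • EuclideanSpace.single x (1:ℝ)) i
        = ∑ x : Fin d, ((∫ z, g z x ∂(stdGaussian d)) • EuclideanSpace.single x (1:ℝ)) i from
      by rw [WithLp.ofLp_sum, Finset.sum_apply]]
  simp [EuclideanSpace.single_apply, PiLp.smul_apply]

end Stmt8Aux

open Stmt8Aux

/-- `Ωε⊙` is convex, the Fenchel equality
`Fε⊙(θ) + Ωε⊙(f̂ε⊙scaled(θ)) = θ · f̂ε⊙scaled(θ)` holds, and consequently `f̂ε⊙scaled(θ)`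
maximizes `μ ↦ θ·μ − Ωε⊙(μ)` over the effective domain of `Ωε⊙`. -/
theorem stmt_8 {d : ℕ} (V : Finset (EuclideanSpace ℝ (Fin d))) (hV : V.Nonempty)
    (f : EuclideanSpace ℝ (Fin d) → EuclideanSpace ℝ (Fin d))
    (hf_meas : Measurable f) (hf_mem : ∀ u, f u ∈ V)
    (hf_max : ∀ u, ∑ i, u i * f u i = V.sup' hV (fun w => ∑ i, u i * w i))
    (ε : ℝ) (hε : 0 < ε) :
    (∀ (μ ν : EuclideanSpace ℝ (Fin d)) (a b : ℝ), 0 ≤ a → 0 ≤ b → a + b = 1 →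
      OmegaMul V hV ε (a • μ + b • ν)
        ≤ (a : EReal) * OmegaMul V hV ε μ + (b : EReal) * OmegaMul V hV ε ν) ∧
    ∀ θ : EuclideanSpace ℝ (Fin d),
      ((Fmul V hV ε θ : ℝ) : EReal) + OmegaMul V hV ε (fmulScaled f ε θ)
          = ((∑ i, θ i * fmulScaled f ε θ i : ℝ) : EReal) ∧
      ∀ μ : EuclideanSpace ℝ (Fin d), OmegaMul V hV ε μ ≠ ⊤ →
        ((∑ i, θ i * μ i : ℝ) : EReal) - OmegaMul V hV ε μ
          ≤ ((∑ i, θ i * fmulScaled f ε θ i : ℝ) : EReal)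
            - OmegaMul V hV ε (fmulScaled f ε θ) := by
  classical
  have hcomp : ∀ θ : EuclideanSpace ℝ (Fin d), ∀ i,
      fmulScaled f ε θ i = ∫ z, Real.exp (ε * z i - ε ^ 2 / 2) * f (mpert ε θ z) i
        ∂(stdGaussian d) := by
    intro θ i
    unfold fmulScaled
    exact integral_apply_eucl (fun z => (WithLp.toLp 2 (fun i => Real.exp (ε * z i - ε ^ 2 / 2)
      * f (mpert ε θ z) i) : EuclideanSpace ℝ (Fin d))) (fun j => integrable_h V hV f hf_meas hf_mem ε θ j) i
  have hintsum : ∀ θ θ' : EuclideanSpace ℝ (Fin d),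
      Integrable (fun z : EuclideanSpace ℝ (Fin d) =>
        ∑ i, mpert ε θ' z i * f (mpert ε θ z) i) (stdGaussian d) := by
    intro θ θ'
    have hrw : (fun z : EuclideanSpace ℝ (Fin d) => ∑ i, mpert ε θ' z i * f (mpert ε θ z) i)
        = fun z => ∑ i, θ' i * (Real.exp (ε * z i - ε ^ 2 / 2) * f (mpert ε θ z) i) := by
      funext z
      refine Finset.sum_congr rfl fun i _ => ?_
      simp only [mpert, PiLp.toLp_apply]; ring
    rw [hrw]
    exact integrable_finset_sum _ fun i _ =>
      (integrable_h V hV f hf_meas hf_mem ε θ i).const_mul _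
  have hsum : ∀ θ θ' : EuclideanSpace ℝ (Fin d),
      (∑ i, θ' i * fmulScaled f ε θ i)
        = ∫ z, ∑ i, mpert ε θ' z i * f (mpert ε θ z) i ∂(stdGaussian d) := by
    intro θ θ'
    have e1 : ∀ i, θ' i * fmulScaled f ε θ i
        = ∫ z, θ' i * (Real.exp (ε * z i - ε ^ 2 / 2) * f (mpert ε θ z) i) ∂(stdGaussian d) := by
      intro i
      rw [hcomp θ i, ← integral_const_mul]
    rw [Finset.sum_congr rfl fun i _ => e1 i,
      ← integral_finset_sum _ fun i _ =>
        (integrable_h V hV f hf_meas hf_mem ε θ i).const_mul _]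
    refine integral_congr_ae (Filter.Eventually.of_forall fun z => ?_)
    refine Finset.sum_congr rfl fun i _ => ?_
    simp only [mpert, PiLp.toLp_apply]; ring
  have hle : ∀ θ θ' : EuclideanSpace ℝ (Fin d),
      (∑ i, θ' i * fmulScaled f ε θ i) ≤ Fmul V hV ε θ' := by
    intro θ θ'
    rw [hsum θ θ']
    unfold Fmul
    refine integral_mono (hintsum θ θ') (integrable_sup V hV ε θ') fun z => ?_
    exact Finset.le_sup' (fun w => ∑ i, mpert ε θ' z i * w i) (hf_mem (mpert ε θ z))
  have heq : ∀ θ : EuclideanSpace ℝ (Fin d),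
      (∑ i, θ i * fmulScaled f ε θ i) = Fmul V hV ε θ := by
    intro θ
    rw [hsum θ θ]
    unfold Fmul
    refine integral_congr_ae (Filter.Eventually.of_forall fun z => ?_)
    exact hf_max (mpert ε θ z)
  have homega : ∀ θ : EuclideanSpace ℝ (Fin d),
      OmegaMul V hV ε (fmulScaled f ε θ) = 0 := by
    intro θ
    refine le_antisymm (iSup_le fun θ' => ?_) ?_
    · have h1 : (∑ i, θ' i * fmulScaled f ε θ i - Fmul V hV ε θ' : ℝ) ≤ 0 := by
        have := hle θ θ'; linarith
      exact_mod_cast h1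
    · have h2 : ((∑ i, θ i * fmulScaled f ε θ i - Fmul V hV ε θ : ℝ) : EReal)
          ≤ OmegaMul V hV ε (fmulScaled f ε θ) :=
        le_iSup (fun θ' : EuclideanSpace ℝ (Fin d) =>
          ((∑ i, θ' i * fmulScaled f ε θ i - Fmul V hV ε θ' : ℝ) : EReal)) θ
      have h3 : (∑ i, θ i * fmulScaled f ε θ i - Fmul V hV ε θ : ℝ) = 0 := by
        rw [heq θ]; ring
      rw [h3] at h2
      exact_mod_cast h2
  constructor
  · intro μ ν a b ha hb hab
    refine iSup_le fun θ' => ?_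
    have hμ' : ((∑ i, θ' i * μ i - Fmul V hV ε θ' : ℝ) : EReal) ≤ OmegaMul V hV ε μ :=
      le_iSup (fun θ'' : EuclideanSpace ℝ (Fin d) =>
        ((∑ i, θ'' i * μ i - Fmul V hV ε θ'' : ℝ) : EReal)) θ'
    have hν' : ((∑ i, θ' i * ν i - Fmul V hV ε θ' : ℝ) : EReal) ≤ OmegaMul V hV ε ν :=
      le_iSup (fun θ'' : EuclideanSpace ℝ (Fin d) =>
        ((∑ i, θ'' i * ν i - Fmul V hV ε θ'' : ℝ) : EReal)) θ'
    have hcomb : (∑ i, θ' i * (a • μ + b • ν) i - Fmul V hV ε θ' : ℝ)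
        = a * (∑ i, θ' i * μ i - Fmul V hV ε θ')
          + b * (∑ i, θ' i * ν i - Fmul V hV ε θ') := by
      have h1 : ∀ i, θ' i * (a • μ + b • ν) i = a * (θ' i * μ i) + b * (θ' i * ν i) := by
        intro i
        have h2 : (a • μ + b • ν) i = a * μ i + b * ν i := rfl
        rw [h2]; ring
      rw [Finset.sum_congr rfl fun i _ => h1 i, Finset.sum_add_distrib,
        ← Finset.mul_sum, ← Finset.mul_sum]
      linear_combination Fmul V hV ε θ' * hab
    rw [hcomb, EReal.coe_add, EReal.coe_mul, EReal.coe_mul]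
    exact add_le_add (mul_le_mul_of_nonneg_left hμ' (by exact_mod_cast ha))
      (mul_le_mul_of_nonneg_left hν' (by exact_mod_cast hb))
  · intro θ
    constructor
    · rw [homega θ, add_zero]
      exact_mod_cast (heq θ).symm
    · intro μ hμtop
      have hlow : ((∑ i, θ i * μ i - Fmul V hV ε θ : ℝ) : EReal) ≤ OmegaMul V hV ε μ :=
        le_iSup (fun θ'' : EuclideanSpace ℝ (Fin d) =>
          ((∑ i, θ'' i * μ i - Fmul V hV ε θ'' : ℝ) : EReal)) θ
      have hbot : OmegaMul V hV ε μ ≠ ⊥ := by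
        intro h
        rw [h, le_bot_iff] at hlow
        exact EReal.coe_ne_bot _ hlow
      have hr : OmegaMul V hV ε μ = (((OmegaMul V hV ε μ).toReal : ℝ) : EReal) :=
        (EReal.coe_toReal hμtop hbot).symm
      rw [hr, homega θ, sub_zero, ← EReal.coe_sub, EReal.coe_le_coe_iff]
      rw [hr, EReal.coe_le_coe_iff] at hlow
      have h3 := heq θ
      linarith
end

section
/- Let θ̄ ∈ ℝ^d, set ȳ = f(θ̄), and define the SPO+ loss L(θ) = max_{v ∈ V} [θ̄ · (ȳ − v) + 2θ · (v − ȳ)]. Then L is convex in θ and 2 f(2θ − θ̄) − 2 ȳ is a subgradient of L at θ: for every θ' ∈ ℝ^d, L(θ') ≥ L(θ) + (2 f(2θ − θ̄) − 2 ȳ) · (θ' − θ). -/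
/-- The SPO+ loss `L(θ) = max_{v ∈ V} [θ̄·(ȳ − v) + 2θ·(v − ȳ)]` (with `ȳ = f(θ̄)`) is
convex in `θ`, and `2 f(2θ − θ̄) − 2ȳ` is a subgradient of `L` at `θ`. -/
theorem stmt_17 {d : ℕ} (V : Finset (EuclideanSpace ℝ (Fin d))) (hV : V.Nonempty)
    (f : EuclideanSpace ℝ (Fin d) → EuclideanSpace ℝ (Fin d))
    (hf_mem : ∀ u, f u ∈ V)
    (hf_max : ∀ u, ∑ i, u i * f u i = V.sup' hV (fun w => ∑ i, u i * w i))
    (θbar : EuclideanSpace ℝ (Fin d)) :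
    ConvexOn ℝ Set.univ
      (fun θ : EuclideanSpace ℝ (Fin d) => V.sup' hV (fun v =>
        ∑ i, θbar i * (f θbar - v) i + 2 * ∑ i, θ i * (v - f θbar) i)) ∧
    ∀ θ θ' : EuclideanSpace ℝ (Fin d),
      V.sup' hV (fun v =>
          ∑ i, θbar i * (f θbar - v) i + 2 * ∑ i, θ' i * (v - f θbar) i)
        ≥ V.sup' hV (fun v =>
            ∑ i, θbar i * (f θbar - v) i + 2 * ∑ i, θ i * (v - f θbar) i)
          + ∑ i, (2 * f ((2 : ℝ) • θ - θbar) i - 2 * f θbar i) * (θ' - θ) i := by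
  -- rewrite the per-vertex objective in linear form
  have hg : ∀ (θ v : EuclideanSpace ℝ (Fin d)),
      (∑ i, θbar i * (f θbar - v) i + 2 * ∑ i, θ i * (v - f θbar) i)
        = (∑ i, (2 * θ i - θbar i) * v i) + ∑ i, (θbar i - 2 * θ i) * f θbar i := by
    intro θ v
    simp only [PiLp.sub_apply]
    rw [Finset.mul_sum, ← Finset.sum_add_distrib, ← Finset.sum_add_distrib]
    exact Finset.sum_congr rfl fun i _ => by ring
  constructor
  · refine ⟨convex_univ, ?_⟩
    intro x _ y _ a b ha hb hab
    apply Finset.sup'_le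
    intro v hv
    have h1 : (∑ i, θbar i * (f θbar - v) i + 2 * ∑ i, x i * (v - f θbar) i)
        ≤ V.sup' hV (fun v => ∑ i, θbar i * (f θbar - v) i + 2 * ∑ i, x i * (v - f θbar) i) :=
      Finset.le_sup' (fun v => ∑ i, θbar i * (f θbar - v) i + 2 * ∑ i, x i * (v - f θbar) i) hv
    have h2 : (∑ i, θbar i * (f θbar - v) i + 2 * ∑ i, y i * (v - f θbar) i)
        ≤ V.sup' hV (fun v => ∑ i, θbar i * (f θbar - v) i + 2 * ∑ i, y i * (v - f θbar) i) :=
      Finset.le_sup' (fun v => ∑ i, θbar i * (f θbar - v) i + 2 * ∑ i, y i * (v - f θbar) i) hv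
    have hlin : (∑ i, θbar i * (f θbar - v) i + 2 * ∑ i, (a • x + b • y) i * (v - f θbar) i)
        = a * (∑ i, θbar i * (f θbar - v) i + 2 * ∑ i, x i * (v - f θbar) i)
          + b * (∑ i, θbar i * (f θbar - v) i + 2 * ∑ i, y i * (v - f θbar) i) := by
      simp only [PiLp.add_apply, PiLp.smul_apply, smul_eq_mul, PiLp.sub_apply,
        Finset.mul_sum, ← Finset.sum_add_distrib]
      refine Finset.sum_congr rfl fun i _ => ?_
      have hb1 : b = 1 - a := by linarith
      subst hb1
      ring
    rw [hlin]
    simp only [smul_eq_mul]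
    nlinarith [h1, h2]
  · intro θ θ'
    set u : EuclideanSpace ℝ (Fin d) := (2 : ℝ) • θ - θbar with hu
    have hui : ∀ i, u i = 2 * θ i - θbar i := by
      intro i; simp [hu, PiLp.sub_apply, PiLp.smul_apply]
    set vstar := f u with hvstar
    -- L(θ) = g θ v*
    have hLθ : V.sup' hV (fun v =>
          ∑ i, θbar i * (f θbar - v) i + 2 * ∑ i, θ i * (v - f θbar) i)
        = ∑ i, θbar i * (f θbar - vstar) i + 2 * ∑ i, θ i * (vstar - f θbar) i := by
      apply le_antisymm
      · apply Finset.sup'_le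
        intro v hv
        rw [hg θ v, hg θ vstar]
        have hmax := hf_max u
        have hle : (∑ i, u i * v i) ≤ ∑ i, u i * vstar i := by
          rw [hmax]; exact Finset.le_sup' (fun w => ∑ i, u i * w i) hv
        simp only [hui] at hle
        linarith
      · exact Finset.le_sup' (fun v => ∑ i, θbar i * (f θbar - v) i + 2 * ∑ i, θ i * (v - f θbar) i) (hf_mem u)
    have hstep : (∑ i, θbar i * (f θbar - vstar) i + 2 * ∑ i, θ' i * (vstar - f θbar) i)
        = (∑ i, θbar i * (f θbar - vstar) i + 2 * ∑ i, θ i * (vstar - f θbar) i)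
          + ∑ i, (2 * vstar i - 2 * f θbar i) * (θ' - θ) i := by
      rw [hg θ' vstar, hg θ vstar]
      simp only [PiLp.sub_apply]
      rw [show ((∑ i, (2 * θ i - θbar i) * vstar i) + ∑ i, (θbar i - 2 * θ i) * f θbar i)
            + ∑ i, (2 * vstar i - 2 * f θbar i) * (θ' i - θ i)
          = ∑ i, ((2 * θ i - θbar i) * vstar i + (θbar i - 2 * θ i) * f θbar i
            + (2 * vstar i - 2 * f θbar i) * (θ' i - θ i)) by
        rw [← Finset.sum_add_distrib, ← Finset.sum_add_distrib]]
      rw [← Finset.sum_add_distrib]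
      exact Finset.sum_congr rfl fun i _ => by ring
    have hfinal : (∑ i, θbar i * (f θbar - vstar) i + 2 * ∑ i, θ' i * (vstar - f θbar) i)
        ≤ V.sup' hV (fun v =>
            ∑ i, θbar i * (f θbar - v) i + 2 * ∑ i, θ' i * (v - f θbar) i) :=
      Finset.le_sup' (fun v => ∑ i, θbar i * (f θbar - v) i + 2 * ∑ i, θ' i * (v - f θbar) i) (hf_mem u)
    rw [ge_iff_le, hLθ]
    calc (∑ i, θbar i * (f θbar - vstar) i + 2 * ∑ i, θ i * (vstar - f θbar) i)
          + ∑ i, (2 * f ((2 : ℝ) • θ - θbar) i - 2 * f θbar i) * (θ' - θ) i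
        = ∑ i, θbar i * (f θbar - vstar) i + 2 * ∑ i, θ' i * (vstar - f θbar) i := by
          rw [hstep]
      _ ≤ _ := hfinal
end
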